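/- Fix m ∈ (−1,1) and c ∈ (0,1). The function θ ↦ Ξ(m,θ;c) is strictly concave on the interval of θ ∈ [0,1] where it is finite, its derivative in θ vanishes at θ = (1+m)/2, and for every κ > 0 the function θ ↦ κθc + Ξ(m,θ;c) has a unique maximizer θ(m) in [0,1]; this maximizer satisfies θ(m) > (1+m)/2 and solves the equation (∂/∂θ) Ξ(m,θ;c) = −κc. -/

import Mathlib

open scoped BigOperators
open Filter

noncomputable section

/-- Entropy function of the Bernoulli distribution (finite branch). -/
def entS (p : ℝ) : ℝ := p * Real.log p + (1 - p) * Real.log (1 - p)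

/-- Mole fraction `p_+ = 2θc/(1+m)`. -/
def pPlus (m θ c : ℝ) : ℝ := 2 * θ * c / (1 + m)

/-- Mole fraction `p_- = 2(1-θ)c/(1-m)`. -/
def pMinus (m θ c : ℝ) : ℝ := 2 * (1 - θ) * c / (1 - m)

/-- `Ξ(m,θ;c)` (finite branch). -/
def Xi (m θ c : ℝ) : ℝ :=
  -((1 + m) / 2) * entS (pPlus m θ c) - ((1 - m) / 2) * entS (pMinus m θ c)

/-- Entropy function with the convention `S(p) = +∞` for `p ∉ [0,1]`. -/
def entSE (p : ℝ) : EReal := if 0 ≤ p ∧ p ≤ 1 then ((entS p : ℝ) : EReal) else ⊤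

/-- `-Ξ(m,θ;c)` as an extended real (`+∞` where some mole fraction leaves `[0,1]`). -/
def negXiE (m θ c : ℝ) : EReal :=
  (((1 + m) / 2 : ℝ) : EReal) * entSE (pPlus m θ c)
    + (((1 - m) / 2 : ℝ) : EReal) * entSE (pMinus m θ c)

/-- The interval of `θ ∈ [0,1]` on which `Ξ(m,·;c)` is finite. -/
def finInt (m c : ℝ) : Set ℝ :=
  {θ | θ ∈ Set.Icc (0 : ℝ) 1 ∧ pPlus m θ c ≤ 1 ∧ pMinus m θ c ≤ 1}

/-!
With `H` the binary entropy, `Ξ(m,θ;c) = (1+m)/2 · H(p₊) + (1-m)/2 · H(p₋)` where `p₊ = 2θc/(1+m)`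
and `p₋ = 2(1-θ)c/(1-m)` are non-constant affine functions of `θ`; strict concavity of `H` on
`[0,1]` gives strict concavity of `Ξ` on `finInt`. At `θ = (1+m)/2` both fractions equal `c`, so
`∂Ξ/∂θ = c (log((1-p₊)/p₊) - log((1-p₋)/p₋))` vanishes there. To the right of that point
`∂Ξ/∂θ ≤ c log((1-p₊) p₋) + const`, which tends to `-∞` at the right end of `finInt`, so the
intermediate value theorem yields `θ₀ > (1+m)/2` with `∂Ξ/∂θ(θ₀) = -κc`. Strict concavity puts `Ξ`
strictly below its tangent line at `θ₀`, which makes `θ₀` the unique maximizer of `κθc + Ξ`.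
-/

open Real Set Filter Topology

theorem StrictConcaveOn.comp_affineMap_of_injective {E F : Type*} [AddCommGroup E] [Module ℝ E]
    [AddCommGroup F] [Module ℝ F] {f : F → ℝ} {s : Set F} (g : E →ᵃ[ℝ] F)
    (hg : Function.Injective g) (hf : StrictConcaveOn ℝ s f) :
    StrictConcaveOn ℝ (g ⁻¹' s) (f ∘ g) :=
  ⟨hf.1.affine_preimage g, fun x hx y hy hxy a b ha hb hab => by
    simpa only [Function.comp, Convex.combo_affine_apply hab] using
      hf.2 hx hy (hg.ne hxy) ha hb hab⟩

theorem StrictConcaveOn.const_mul {E : Type*} [AddCommGroup E] [Module ℝ E] {f : E → ℝ}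
    {s : Set E} (hf : StrictConcaveOn ℝ s f) {a : ℝ} (ha : 0 < a) :
    StrictConcaveOn ℝ s (fun x => a * f x) :=
  ⟨hf.1, fun x hx y hy hxy u v hu hv huv => by
    have := mul_lt_mul_of_pos_left (hf.2 hx hy hxy hu hv huv) ha
    simp only [smul_eq_mul] at this ⊢
    linarith⟩

theorem StrictConcaveOn.lt_add_deriv_mul_sub {S : Set ℝ} {f : ℝ → ℝ} {x y f' : ℝ}
    (hf : StrictConcaveOn ℝ S f) (hx : x ∈ S) (hy : y ∈ S) (hyx : y ≠ x)
    (hfx : HasDerivAt f f' x) : f y < f x + f' * (y - x) := by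
  rcases hyx.lt_or_gt with hlt | hgt
  · have := hf.lt_slope_of_hasDerivAt hy hx hlt hfx
    rw [slope_def_field, lt_div_iff₀ (sub_pos.2 hlt)] at this
    linarith
  · have := hf.slope_lt_of_hasDerivAt hx hy hgt hfx
    rw [slope_def_field, div_lt_iff₀ (sub_pos.2 hgt)] at this
    linarith

section

variable {m c θ : ℝ}

theorem entS_eq_neg_binEntropy (p : ℝ) : entS p = -binEntropy p := by
  simp only [entS, binEntropy, log_inv]
  ring

theorem Xi_eq_binEntropy :
    Xi m θ c = (1 + m) / 2 * binEntropy (pPlus m θ c) + (1 - m) / 2 * binEntropy (pMinus m θ c) := by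
  simp only [Xi, entS_eq_neg_binEntropy]
  ring

def pPlusAffine (m c : ℝ) : ℝ →ᵃ[ℝ] ℝ := AffineMap.lineMap 0 (2 * c / (1 + m))

def pMinusAffine (m c : ℝ) : ℝ →ᵃ[ℝ] ℝ := AffineMap.lineMap (2 * c / (1 - m)) 0

theorem pPlusAffine_apply : pPlusAffine m c θ = pPlus m θ c := by
  simp only [pPlusAffine, AffineMap.lineMap_apply_ring', pPlus]
  ring

theorem pMinusAffine_apply : pMinusAffine m c θ = pMinus m θ c := by
  simp only [pMinusAffine, AffineMap.lineMap_apply_ring', pMinus]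
  ring

theorem finInt_eq_preimage (hm : m ∈ Ioo (-1) 1) (hc : 0 < c) :
    finInt m c = pPlusAffine m c ⁻¹' Icc 0 1 ∩ pMinusAffine m c ⁻¹' Icc 0 1 := by
  have h₁ : 0 < 1 + m := by linarith [hm.1]
  have h₂ : 0 < 1 - m := by linarith [hm.2]
  have hP : ∀ θ, 0 ≤ pPlus m θ c ↔ 0 ≤ θ := fun θ => by
    rw [pPlus, le_div_iff₀ h₁, zero_mul]
    constructor <;> intro <;> nlinarith
  have hM : ∀ θ, 0 ≤ pMinus m θ c ↔ θ ≤ 1 := fun θ => by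
    rw [pMinus, le_div_iff₀ h₂, zero_mul]
    constructor <;> intro <;> nlinarith
  ext θ
  simp only [finInt, mem_ofPred_eq, mem_inter_iff, mem_preimage, mem_Icc, pPlusAffine_apply,
    pMinusAffine_apply, hP, hM]
  tauto

theorem strictConcaveOn_Xi (hm : m ∈ Ioo (-1) 1) (hc : 0 < c) :
    StrictConcaveOn ℝ (finInt m c) (fun θ => Xi m θ c) := by
  have h₁ : 0 < 1 + m := by linarith [hm.1]
  have h₂ : 0 < 1 - m := by linarith [hm.2]
  have hP := (strictConcave_binEntropy.comp_affineMap_of_injective (pPlusAffine m c)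
    (AffineMap.lineMap_injective ℝ (by positivity))).const_mul (by positivity : 0 < (1 + m) / 2)
  have hM := (strictConcave_binEntropy.comp_affineMap_of_injective (pMinusAffine m c)
    (AffineMap.lineMap_injective ℝ (by positivity))).const_mul (by positivity : 0 < (1 - m) / 2)
  have hXi : (fun θ => Xi m θ c) = fun θ => (1 + m) / 2 * (binEntropy ∘ pPlusAffine m c) θ
      + (1 - m) / 2 * (binEntropy ∘ pMinusAffine m c) θ := by
    ext θ
    rw [Function.comp_apply, Function.comp_apply, pPlusAffine_apply, pMinusAffine_apply,
      Xi_eq_binEntropy]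
  have hconv := hP.1.inter hM.1
  rw [finInt_eq_preimage hm hc, hXi]
  exact (hP.subset inter_subset_left hconv).add (hM.subset inter_subset_right hconv)

def XiDeriv (m c θ : ℝ) : ℝ :=
  c * (log (1 - pPlus m θ c) - log (pPlus m θ c))
    - c * (log (1 - pMinus m θ c) - log (pMinus m θ c))

theorem hasDerivAt_Xi (hm : m ∈ Ioo (-1) 1) (hPlus : pPlus m θ c ∈ Ioo 0 1)
    (hMinus : pMinus m θ c ∈ Ioo 0 1) : HasDerivAt (fun θ => Xi m θ c) (XiDeriv m c θ) θ := by
  have h₁ : 1 + m ≠ 0 := by linarith [hm.1]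
  have h₂ : 1 - m ≠ 0 := by linarith [hm.2]
  have dP : HasDerivAt (fun θ => pPlus m θ c) (2 * c / (1 + m)) θ := by
    simpa [pPlus] using (((hasDerivAt_id θ).const_mul 2).mul_const c).div_const (1 + m)
  have dM : HasDerivAt (fun θ => pMinus m θ c) (-(2 * c / (1 - m))) θ := by
    simpa [pMinus, neg_div] using
      ((((hasDerivAt_id θ).const_sub 1).const_mul 2).mul_const c).div_const (1 - m)
  have dHP := (hasDerivAt_binEntropy hPlus.1.ne' hPlus.2.ne).comp θ dP
  have dHM := (hasDerivAt_binEntropy hMinus.1.ne' hMinus.2.ne).comp θ dM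
  rw [show (fun θ => Xi m θ c) = fun θ => (1 + m) / 2 * binEntropy (pPlus m θ c)
      + (1 - m) / 2 * binEntropy (pMinus m θ c) from funext fun _ => Xi_eq_binEntropy]
  refine ((dHP.const_mul ((1 + m) / 2)).add (dHM.const_mul ((1 - m) / 2))).congr_deriv ?_
  rw [XiDeriv]
  field_simp
  ring

theorem pPlus_mid (hm : m ∈ Ioo (-1) 1) : pPlus m ((1 + m) / 2) c = c := by
  have h₁ : 1 + m ≠ 0 := by linarith [hm.1]
  rw [pPlus]
  field_simp

theorem pMinus_mid (hm : m ∈ Ioo (-1) 1) : pMinus m ((1 + m) / 2) c = c := by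
  have h₂ : 1 - m ≠ 0 := by linarith [hm.2]
  rw [pMinus]
  field_simp
  ring

theorem XiDeriv_mid (hm : m ∈ Ioo (-1) 1) : XiDeriv m c ((1 + m) / 2) = 0 := by
  rw [XiDeriv, pPlus_mid hm, pMinus_mid hm, sub_self]

theorem mem_finInt_of_mem_Ioo (hm : m ∈ Ioo (-1) 1) (hc : 0 < c)
    (hPlus : pPlus m θ c ∈ Ioo 0 1) (hMinus : pMinus m θ c ∈ Ioo 0 1) : θ ∈ finInt m c := by
  rw [finInt_eq_preimage hm hc, mem_inter_iff, mem_preimage, mem_preimage, pPlusAffine_apply,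
    pMinusAffine_apply]
  exact ⟨Ioo_subset_Icc_self hPlus, Ioo_subset_Icc_self hMinus⟩

@[fun_prop]
theorem continuous_pPlus : Continuous (fun θ => pPlus m θ c) := by
  unfold pPlus
  fun_prop

@[fun_prop]
theorem continuous_pMinus : Continuous (fun θ => pMinus m θ c) := by
  unfold pMinus
  fun_prop

theorem continuousAt_XiDeriv (hPlus : pPlus m θ c ∈ Ioo 0 1)
    (hMinus : pMinus m θ c ∈ Ioo 0 1) : ContinuousAt (XiDeriv m c) θ := by
  simp only [mem_Ioo] at hPlus hMinus
  unfold XiDeriv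
  fun_prop (disch := grind)

-- The right end of `finInt m c`, where `pMinus` vanishes or `pPlus` reaches `1`.
def thetaUpper (m c : ℝ) : ℝ := min 1 ((1 + m) / (2 * c))

theorem mid_lt_thetaUpper (hm : m ∈ Ioo (-1) 1) (hc : c ∈ Ioo 0 1) :
    (1 + m) / 2 < thetaUpper m c := by
  obtain ⟨hm₁, hm₂⟩ := hm
  obtain ⟨hc₀, hc₁⟩ := hc
  refine lt_min (by linarith) ?_
  rw [lt_div_iff₀ (by positivity)]
  nlinarith

theorem one_sub_pPlus_mul_pMinus_thetaUpper (hm : m ∈ Ioo (-1) 1) (hc : 0 < c) :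
    (1 - pPlus m (thetaUpper m c) c) * pMinus m (thetaUpper m c) c = 0 := by
  have h₁ : 1 + m ≠ 0 := by linarith [hm.1]
  rcases min_choice (1 : ℝ) ((1 + m) / (2 * c)) with h | h <;> rw [thetaUpper, h]
  · simp [pMinus]
  · rw [pPlus]
    field_simp
    ring

theorem pPlus_mem_Ico (hm : m ∈ Ioo (-1) 1) (hc : 0 < c)
    (hθ : θ ∈ Ico ((1 + m) / 2) (thetaUpper m c)) : pPlus m θ c ∈ Ico c 1 := by
  have h₁ : 0 < 1 + m := by linarith [hm.1]
  have hθc : θ < (1 + m) / (2 * c) := hθ.2.trans_le (min_le_right _ _)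
  rw [lt_div_iff₀ (by positivity)] at hθc
  rw [pPlus, mem_Ico, le_div_iff₀ h₁, div_lt_one h₁]
  constructor <;> nlinarith [hθ.1]

theorem pMinus_mem_Ioc (hm : m ∈ Ioo (-1) 1) (hc : 0 < c)
    (hθ : θ ∈ Ico ((1 + m) / 2) (thetaUpper m c)) : pMinus m θ c ∈ Ioc 0 c := by
  have h₂ : 0 < 1 - m := by linarith [hm.2]
  have hθ1 : θ < 1 := hθ.2.trans_le (min_le_left _ _)
  rw [pMinus, mem_Ioc, div_le_iff₀ h₂]
  constructor
  · have : 0 < 1 - θ := by linarith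
    positivity
  · nlinarith [hθ.1]

theorem pPlus_pMinus_mem_Ioo (hm : m ∈ Ioo (-1) 1) (hc : c ∈ Ioo 0 1)
    (hθ : θ ∈ Ico ((1 + m) / 2) (thetaUpper m c)) :
    pPlus m θ c ∈ Ioo 0 1 ∧ pMinus m θ c ∈ Ioo 0 1 := by
  have hP := pPlus_mem_Ico hm hc.1 hθ
  have hM := pMinus_mem_Ioc hm hc.1 hθ
  exact ⟨⟨hc.1.trans_le hP.1, hP.2⟩, ⟨hM.1, hM.2.trans_lt hc.2⟩⟩

theorem XiDeriv_le (hm : m ∈ Ioo (-1) 1) (hc : c ∈ Ioo 0 1)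
    (hθ : θ ∈ Ico ((1 + m) / 2) (thetaUpper m c)) :
    XiDeriv m c θ ≤
      c * log ((1 - pPlus m θ c) * pMinus m θ c) - c * (log c + log (1 - c)) := by
  have hP := pPlus_mem_Ico hm hc.1 hθ
  have hM := pMinus_mem_Ioc hm hc.1 hθ
  have hlogP : log c ≤ log (pPlus m θ c) := log_le_log hc.1 hP.1
  have hlogM : log (1 - c) ≤ log (1 - pMinus m θ c) :=
    log_le_log (by linarith [hc.2]) (by linarith [hM.2])
  have := mul_le_mul_of_nonneg_left (add_le_add hlogP hlogM) hc.1.le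
  rw [log_mul (by linarith [hP.2]) hM.1.ne', XiDeriv]
  linarith

theorem tendsto_XiDeriv_atBot (hm : m ∈ Ioo (-1) 1) (hc : c ∈ Ioo 0 1) :
    Tendsto (XiDeriv m c) (𝓝[<] thetaUpper m c) atBot := by
  have hIco : ∀ᶠ θ in 𝓝[<] thetaUpper m c, θ ∈ Ico ((1 + m) / 2) (thetaUpper m c) :=
    mem_of_superset (Ioo_mem_nhdsLT (mid_lt_thetaUpper hm hc)) Ioo_subset_Ico_self
  have hprod : Tendsto (fun θ => (1 - pPlus m θ c) * pMinus m θ c)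
      (𝓝[<] thetaUpper m c) (𝓝[>] 0) := by
    refine tendsto_nhdsWithin_iff.2 ⟨?_, hIco.mono fun θ hθ => ?_⟩
    · rw [← one_sub_pPlus_mul_pMinus_thetaUpper hm hc.1]
      exact ((by fun_prop : Continuous fun θ => (1 - pPlus m θ c) * pMinus m θ c).tendsto _)
        |>.mono_left nhdsWithin_le_nhds
    · obtain ⟨hP, hM⟩ := pPlus_pMinus_mem_Ioo hm hc hθ
      exact mul_pos (sub_pos.2 hP.2) hM.1
  refine tendsto_atBot_mono' _ (hIco.mono fun θ hθ => XiDeriv_le hm hc hθ) ?_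
  simpa only [sub_eq_add_neg, Function.comp_def] using tendsto_atBot_add_const_right _ _
    ((tendsto_log_nhdsGT_zero.comp hprod).const_mul_atBot hc.1)

theorem exists_XiDeriv_eq {y : ℝ} (hm : m ∈ Ioo (-1) 1) (hc : c ∈ Ioo 0 1) (hy : y < 0) :
    ∃ θ, (1 + m) / 2 < θ ∧ pPlus m θ c ∈ Ioo 0 1 ∧ pMinus m θ c ∈ Ioo 0 1 ∧
      XiDeriv m c θ = y := by
  obtain ⟨θ₂, hθ₂y, hθ₂⟩ := (((tendsto_XiDeriv_atBot hm hc).eventually (eventually_lt_atBot y)).and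
    (Ioo_mem_nhdsLT (mid_lt_thetaUpper hm hc))).exists
  have hsub : Icc ((1 + m) / 2) θ₂ ⊆ Ico ((1 + m) / 2) (thetaUpper m c) :=
    Icc_subset_Ico_right hθ₂.2
  have hcont : ContinuousOn (XiDeriv m c) (Icc ((1 + m) / 2) θ₂) := fun θ hθ =>
    (continuousAt_XiDeriv (pPlus_pMinus_mem_Ioo hm hc (hsub hθ)).1
      (pPlus_pMinus_mem_Ioo hm hc (hsub hθ)).2).continuousWithinAt
  obtain ⟨θ, hθ, hθy⟩ := intermediate_value_Icc' hθ₂.1.le hcont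
    ⟨hθ₂y.le, (XiDeriv_mid hm).symm ▸ hy.le⟩
  refine ⟨θ, hθ.1.lt_of_ne ?_, pPlus_pMinus_mem_Ioo hm hc (hsub hθ) |>.1,
    pPlus_pMinus_mem_Ioo hm hc (hsub hθ) |>.2, hθy⟩
  rintro rfl
  rw [XiDeriv_mid hm] at hθy
  linarith

end

/-- `θ ↦ Ξ(m,θ;c)` is strictly concave on the interval where it is
finite, its `θ`-derivative vanishes at `θ = (1+m)/2`, and for every `κ > 0` the function
`θ ↦ κθc + Ξ(m,θ;c)` has a unique maximizer `θ(m)`, which satisfies `θ(m) > (1+m)/2` and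
solves `(∂/∂θ) Ξ(m,θ;c) = −κc`. -/
theorem statement11 (m c : ℝ) (hm : m ∈ Set.Ioo (-1 : ℝ) 1) (hc : c ∈ Set.Ioo (0 : ℝ) 1) :
    StrictConcaveOn ℝ (finInt m c) (fun θ => Xi m θ c) ∧
    deriv (fun θ => Xi m θ c) ((1 + m) / 2) = 0 ∧
    ∀ κ : ℝ, 0 < κ →
      ∃ θ0 : ℝ, θ0 ∈ finInt m c ∧
        (∀ θ ∈ finInt m c, κ * θ * c + Xi m θ c ≤ κ * θ0 * c + Xi m θ0 c) ∧
        (∀ θ' ∈ finInt m c,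
          (∀ θ ∈ finInt m c, κ * θ * c + Xi m θ c ≤ κ * θ' * c + Xi m θ' c) → θ' = θ0) ∧
        (1 + m) / 2 < θ0 ∧
        deriv (fun θ => Xi m θ c) θ0 = -(κ * c) := by
  have hconc := strictConcaveOn_Xi hm hc.1
  have hmid : pPlus m ((1 + m) / 2) c ∈ Ioo 0 1 ∧ pMinus m ((1 + m) / 2) c ∈ Ioo 0 1 := by
    rw [pPlus_mid hm, pMinus_mid hm]
    exact ⟨hc, hc⟩
  refine ⟨hconc, by rw [(hasDerivAt_Xi hm hmid.1 hmid.2).deriv, XiDeriv_mid hm], fun κ hκ => ?_⟩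
  obtain ⟨θ₀, hmidθ₀, hPlus, hMinus, hXiDeriv⟩ :=
    exists_XiDeriv_eq hm hc (neg_lt_zero.2 (mul_pos hκ hc.1))
  have hderiv := hasDerivAt_Xi hm hPlus hMinus
  have hθ₀ : θ₀ ∈ finInt m c := mem_finInt_of_mem_Ioo hm hc.1 hPlus hMinus
  have hstrict : ∀ θ ∈ finInt m c, θ ≠ θ₀ → κ * θ * c + Xi m θ c < κ * θ₀ * c + Xi m θ₀ c := by
    intro θ hθ hne
    have := hconc.lt_add_deriv_mul_sub hθ₀ hθ hne (hXiDeriv ▸ hderiv)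
    linarith
  refine ⟨θ₀, hθ₀, fun θ hθ => ?_, fun θ' hθ' hmax => ?_, hmidθ₀, hXiDeriv ▸ hderiv.deriv⟩
  · rcases eq_or_ne θ θ₀ with rfl | hne
    · rfl
    · exact (hstrict θ hθ hne).le
  · by_contra hne
    exact (hmax θ₀ hθ₀).not_gt (hstrict θ' hθ' hne)
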